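/- Let z > 0 be real, let w₁, w₂ ∈ ℂ, and set ν = (w₁ − w₂)/z. For each choice of sign ε ∈ {+1, −1}, the function I(q) = q^{(w₁+w₂)/(2z)}·I_{εν}(2√q/z) satisfies z²q²I''(q) + z²qI'(q) − (w₁+w₂)zqI'(q) + w₁w₂I(q) = qI(q) for all q > 0. -/

import Mathlib

/-!
Frobenius method. For `q > 0`, `q ^ σ * I_α(2√q / z)` with `σ = (w₁ + w₂) / (2z)` and `α = εν` is
the Frobenius series `∑ kₘ q ^ (m + μ)` with `μ = σ + α / 2` and
`kₘ = z ^ (-(2m + α)) / (m! Γ(m + α + 1))`. With the Euler operator `θ = q d/dq` the equation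
reads `(zθ - w₁)(zθ - w₂) I = q I`, and `θ` multiplies `q ^ (m + μ)` by `m + μ`. Since
`zμ ∈ {w₁, w₂}`, the indicial polynomial becomes `(z(m + μ) - w₁)(z(m + μ) - w₂) = z² m (m + α)`,
and the recurrence `kₘ = z² (m + 1)(m + 1 + α) kₘ₊₁` (from `1/Γ(s) = s/Γ(s + 1)`, which also holds
at the poles) turns the left-hand side into the shifted series `q I`. The same recurrence makes
`∑ kₘ xᵐ` entire, which justifies differentiating term by term.
-/

/-- The modified Bessel function of the first kind `I_α(x)`, for `α ∈ ℂ` and real `x`,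
defined via its power series; terms where `Γ` hits a pole vanish since
Mathlib's `Complex.Gamma` is `0` at the poles (so `1/Γ = 0` there). -/
noncomputable def besselI (α : ℂ) (x : ℝ) : ℂ :=
  ∑' m : ℕ, (1 / ((Nat.factorial m : ℂ) * Complex.Gamma ((m : ℂ) + α + 1))) *
    (((x : ℂ) / 2) ^ (2 * (m : ℂ) + α))

open Complex Filter Topology Set

def HasInfiniteRadius (c : ℕ → ℂ) : Prop :=
  ∀ R : ℝ, Summable fun m => ‖c m‖ * R ^ m

noncomputable def frobeniusSeries (c : ℕ → ℂ) (μ : ℂ) (y : ℝ) : ℂ :=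
  ∑' m : ℕ, c m * (y : ℂ) ^ ((m : ℂ) + μ)

lemma norm_ofReal_cpow_natCast_add {y : ℝ} (hy : 0 < y) (m : ℕ) (μ : ℂ) :
    ‖(y : ℂ) ^ ((m : ℂ) + μ)‖ = y ^ m * y ^ μ.re := by
  rw [norm_cpow_eq_rpow_re_of_pos hy, add_re, natCast_re, Real.rpow_add hy, Real.rpow_natCast]

lemma rpow_le_max_of_mem_Icc {a b t : ℝ} (ha : 0 < a) (ht : t ∈ Icc a b) (r : ℝ) :
    t ^ r ≤ max (a ^ r) (b ^ r) := by
  rcases le_total 0 r with hr | hr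
  · exact le_max_of_le_right (Real.rpow_le_rpow (ha.le.trans ht.1) ht.2 hr)
  · exact le_max_of_le_left (Real.rpow_le_rpow_of_nonpos ha ht.1 hr)

lemma norm_natCast_add_le_mul_two_pow (m : ℕ) (μ : ℂ) : ‖(m : ℂ) + μ‖ ≤ (1 + ‖μ‖) * 2 ^ m := by
  have hm : (m : ℝ) ≤ 2 ^ m := by exact_mod_cast m.lt_two_pow_self.le
  have h1 : (1 : ℝ) ≤ 2 ^ m := one_le_pow₀ (by norm_num)
  calc ‖(m : ℂ) + μ‖ ≤ m + ‖μ‖ := by simpa using norm_add_le (m : ℂ) μ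
    _ ≤ 2 ^ m + ‖μ‖ * 2 ^ m := by gcongr; exact le_mul_of_one_le_right (norm_nonneg μ) h1
    _ = (1 + ‖μ‖) * 2 ^ m := by ring

section FrobeniusSeries

variable {c : ℕ → ℂ}

lemma summable_frobeniusSeries (hc : HasInfiniteRadius c) (μ : ℂ) {y : ℝ} (hy : 0 < y) :
    Summable fun m => c m * (y : ℂ) ^ ((m : ℂ) + μ) := by
  refine .of_norm ?_
  simp_rw [norm_mul, norm_ofReal_cpow_natCast_add hy, ← mul_assoc]
  exact (hc y).mul_right _

lemma HasInfiniteRadius.natCast_add_mul (hc : HasInfiniteRadius c) (μ : ℂ) :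
    HasInfiniteRadius fun m => ((m : ℂ) + μ) * c m := by
  intro R
  refine .of_norm_bounded ((hc (2 * |R|)).mul_left (1 + ‖μ‖)) fun m => ?_
  rw [norm_mul, norm_norm, norm_mul, norm_pow, Real.norm_eq_abs, mul_pow]
  calc ‖(m : ℂ) + μ‖ * ‖c m‖ * |R| ^ m ≤ ((1 + ‖μ‖) * 2 ^ m) * ‖c m‖ * |R| ^ m := by
        gcongr; exact norm_natCast_add_le_mul_two_pow m μ
    _ = (1 + ‖μ‖) * (‖c m‖ * (2 ^ m * |R| ^ m)) := by ring

lemma hasDerivAt_frobeniusSeries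
    (hc : HasInfiniteRadius c) (μ : ℂ) {y : ℝ} (hy : 0 < y) :
    HasDerivAt (frobeniusSeries c μ)
      (frobeniusSeries (fun m => ((m : ℂ) + μ) * c m) μ y / y) y := by
  set M := max ((y / 2) ^ (μ - 1).re) ((2 * y) ^ (μ - 1).re)
  have hterm : ∀ (m : ℕ) (t : ℝ), 0 < t → HasDerivAt (fun t : ℝ => c m * (t : ℂ) ^ ((m : ℂ) + μ))
      (((m : ℂ) + μ) * c m * (t : ℂ) ^ ((m : ℂ) + (μ - 1))) t := by
    intro m t ht
    have := ((hasStrictDerivAt_cpow_const (c := (m : ℂ) + μ)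
      (ofReal_mem_slitPlane.mpr ht)).hasDerivAt.comp_ofReal).const_mul (c m)
    exact this.congr_deriv (by rw [add_sub_assoc]; ring)
  have hbound : ∀ (m : ℕ) t, t ∈ Ioo (y / 2) (2 * y) →
      ‖((m : ℂ) + μ) * c m * (t : ℂ) ^ ((m : ℂ) + (μ - 1))‖ ≤
        M * (‖((m : ℂ) + μ) * c m‖ * (2 * y) ^ m) := by
    intro m t ht
    have ht0 : 0 < t := by linarith [ht.1]
    rw [norm_mul, norm_ofReal_cpow_natCast_add ht0]
    calc ‖((m : ℂ) + μ) * c m‖ * (t ^ m * t ^ (μ - 1).re)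
        ≤ ‖((m : ℂ) + μ) * c m‖ * ((2 * y) ^ m * M) := by
          gcongr
          · exact ht.2.le
          · exact rpow_le_max_of_mem_Icc (by positivity) (Ioo_subset_Icc_self ht) _
      _ = M * (‖((m : ℂ) + μ) * c m‖ * (2 * y) ^ m) := by ring
  have hy_mem : y ∈ Ioo (y / 2) (2 * y) := ⟨by linarith, by linarith⟩
  refine (hasDerivAt_tsum_of_isPreconnected
    ((hc.natCast_add_mul μ (2 * y)).mul_left M) isOpen_Ioo
    isPreconnected_Ioo (fun m t ht => hterm m t (by linarith [ht.1])) hbound hy_mem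
    (summable_frobeniusSeries hc μ hy) hy_mem).congr_deriv ?_
  rw [frobeniusSeries, ← tsum_div_const]
  refine tsum_congr fun m => ?_
  rw [← add_sub_assoc, cpow_sub _ _ (ofReal_ne_zero.mpr hy.ne'), cpow_one, mul_div_assoc]

lemma ofReal_mul_deriv_frobeniusSeries
    (hc : HasInfiniteRadius c) (μ : ℂ) {y : ℝ} (hy : 0 < y) :
    (y : ℂ) * deriv (frobeniusSeries c μ) y =
      frobeniusSeries (fun m => ((m : ℂ) + μ) * c m) μ y := by
  rw [(hasDerivAt_frobeniusSeries hc μ hy).deriv, mul_div_cancel₀ _ (ofReal_ne_zero.mpr hy.ne')]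

lemma ofReal_sq_mul_deriv_deriv_frobeniusSeries_add
    (hc : HasInfiniteRadius c) (μ : ℂ) {y : ℝ} (hy : 0 < y) :
    (y : ℂ) ^ 2 * deriv (deriv (frobeniusSeries c μ)) y + y * deriv (frobeniusSeries c μ) y =
      frobeniusSeries (fun m => ((m : ℂ) + μ) * (((m : ℂ) + μ) * c m)) μ y := by
  have hderiv : deriv (frobeniusSeries c μ) =ᶠ[𝓝 y]
      fun t => frobeniusSeries (fun m => ((m : ℂ) + μ) * c m) μ t / t :=
    eventually_of_mem (Ioi_mem_nhds hy) fun t ht => (hasDerivAt_frobeniusSeries hc μ ht).deriv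
  have hy0 : (y : ℂ) ≠ 0 := ofReal_ne_zero.mpr hy.ne'
  have h2 := (hasDerivAt_frobeniusSeries (hc.natCast_add_mul μ) μ hy).fun_div
    (hasDerivAt_id y).ofReal_comp hy0
  simp only [id] at h2
  rw [hderiv.deriv_eq, h2.deriv, hderiv.eq_of_nhds]
  generalize frobeniusSeries (fun m => ((m : ℂ) + μ) * (((m : ℂ) + μ) * c m)) μ y = F₂
  generalize frobeniusSeries (fun m => ((m : ℂ) + μ) * c m) μ y = F₁
  field_simp
  push_cast
  ring

theorem frobeniusSeries_ode (hc : HasInfiniteRadius c)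
    {μ A B C : ℂ} (h0 : (A * μ ^ 2 + B * μ + C) * c 0 = 0)
    (hrec : ∀ m : ℕ,
      (A * (((m + 1 : ℕ) : ℂ) + μ) ^ 2 + B * (((m + 1 : ℕ) : ℂ) + μ) + C) * c (m + 1) = c m)
    {q : ℝ} (hq : 0 < q) :
    A * ((q : ℂ) ^ 2 * deriv (deriv (frobeniusSeries c μ)) q + q * deriv (frobeniusSeries c μ) q) +
      B * (q * deriv (frobeniusSeries c μ) q) + C * frobeniusSeries c μ q =
        q * frobeniusSeries c μ q := by
  have hc' := hc.natCast_add_mul μ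
  rw [ofReal_sq_mul_deriv_deriv_frobeniusSeries_add hc μ hq,
    ofReal_mul_deriv_frobeniusSeries hc μ hq]
  have S0 := (summable_frobeniusSeries hc μ hq).mul_left C
  have S1 := (summable_frobeniusSeries hc' μ hq).mul_left B
  have S2 := (summable_frobeniusSeries (hc'.natCast_add_mul μ) μ hq).mul_left A
  have hS := (S2.hasSum.add S1.hasSum).add S0.hasSum
  rw [tsum_mul_left, tsum_mul_left, tsum_mul_left] at hS
  replace hS := hS.congr_fun (g := fun m : ℕ =>
    (A * ((m : ℂ) + μ) ^ 2 + B * ((m : ℂ) + μ) + C) * c m * (q : ℂ) ^ ((m : ℂ) + μ))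
    fun m => by ring
  rw [frobeniusSeries, frobeniusSeries, frobeniusSeries, ← hS.tsum_eq,
    hS.summable.tsum_eq_zero_add, ← tsum_mul_left]
  simp only [Nat.cast_zero, zero_add, h0, zero_mul, hrec]
  refine tsum_congr fun m => ?_
  rw [Nat.cast_succ, add_right_comm, cpow_add _ _ (ofReal_ne_zero.mpr hq.ne'), cpow_one]
  ring

end FrobeniusSeries

lemma hasInfiniteRadius_of_eq_mul {c a : ℕ → ℂ} (hrec : ∀ m, c m = a m * c (m + 1))
    (ha : Tendsto (fun m => ‖a m‖) atTop atTop) : HasInfiniteRadius c := by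
  intro R
  refine summable_of_ratio_norm_eventually_le (r := 1 / 2) (by norm_num) ?_
  filter_upwards [ha.eventually_ge_atTop (2 * |R|)] with m hm
  rw [norm_mul, norm_mul, norm_norm, norm_norm, norm_pow, norm_pow, Real.norm_eq_abs, hrec m,
    norm_mul, pow_succ]
  calc ‖c (m + 1)‖ * (|R| ^ m * |R|) ≤ ‖c (m + 1)‖ * (|R| ^ m * (‖a m‖ / 2)) := by
        gcongr; linarith
    _ = 1 / 2 * (‖a m‖ * ‖c (m + 1)‖ * |R| ^ m) := by ring

lemma tendsto_norm_natCast_add_atTop (β : ℂ) :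
    Tendsto (fun m : ℕ => ‖(m : ℂ) + β‖) atTop atTop := by
  refine tendsto_atTop_mono (fun m => ?_)
    (tendsto_atTop_add_const_right _ (-‖β‖) tendsto_natCast_atTop_atTop)
  have := norm_sub_norm_le (m : ℂ) (-β)
  rw [sub_neg_eq_add, norm_neg, Complex.norm_natCast] at this
  linarith

noncomputable def besselCoeff (α : ℂ) (m : ℕ) : ℂ :=
  1 / ((m.factorial : ℂ) * Gamma ((m : ℂ) + α + 1))

lemma besselI_eq_tsum (α : ℂ) (x : ℝ) :
    besselI α x = ∑' m : ℕ, besselCoeff α m * ((x : ℂ) / 2) ^ (2 * (m : ℂ) + α) := rfl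

lemma besselCoeff_eq_mul_besselCoeff_succ (α : ℂ) (m : ℕ) :
    besselCoeff α m = ((m : ℂ) + 1) * ((m : ℂ) + 1 + α) * besselCoeff α (m + 1) := by
  have hm : ((m : ℂ) + 1) ≠ 0 := Nat.cast_add_one_ne_zero m
  simp only [besselCoeff, one_div, mul_inv, Nat.factorial_succ, Nat.cast_mul, Nat.cast_succ]
  rw [one_div_Gamma_eq_self_mul_one_div_Gamma_add_one ((m : ℂ) + α + 1)]
  field_simp
  ring_nf

lemma tendsto_norm_mul_natCast_add_one_mul_atTop {s : ℂ} (hs : s ≠ 0) (α : ℂ) :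
    Tendsto (fun m : ℕ => ‖s * (((m : ℂ) + 1) * ((m : ℂ) + 1 + α))‖) atTop atTop := by
  refine tendsto_atTop_mono (fun m => ?_)
    ((tendsto_norm_natCast_add_atTop (1 + α)).const_mul_atTop (norm_pos_iff.mpr hs))
  have h1 : (1 : ℝ) ≤ ‖(m : ℂ) + 1‖ := by
    rw [← Nat.cast_add_one, Complex.norm_natCast]; exact_mod_cast Nat.le_add_left 1 m
  rw [norm_mul, norm_mul, add_assoc]
  gcongr
  exact le_mul_of_one_le_left (norm_nonneg _) h1

lemma besselCoeff_mul_cpow_eq_mul_succ {w : ℂ} (hw : w ≠ 0) (α : ℂ) (m : ℕ) :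
    besselCoeff α m * w ^ (2 * (m : ℂ) + α) =
      w⁻¹ ^ 2 * (((m : ℂ) + 1) * ((m : ℂ) + 1 + α)) *
        (besselCoeff α (m + 1) * w ^ (2 * ((m + 1 : ℕ) : ℂ) + α)) := by
  rw [besselCoeff_eq_mul_besselCoeff_succ,
    show 2 * ((m + 1 : ℕ) : ℂ) + α = (2 * (m : ℂ) + α) + 2 by push_cast; ring,
    cpow_add (2 * (m : ℂ) + α) 2 hw, cpow_ofNat]
  field_simp

lemma ofReal_cpow_mul_besselI {z q : ℝ} (hz : 0 < z) (hq : 0 < q) (α σ : ℂ) :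
    (q : ℂ) ^ σ * besselI α (2 * √q / z) =
      frobeniusSeries (fun m => besselCoeff α m * ((z : ℂ)⁻¹) ^ (2 * (m : ℂ) + α))
        (σ + α / 2) q := by
  rw [besselI_eq_tsum, frobeniusSeries, ← tsum_mul_left]
  refine tsum_congr fun m => ?_
  have hhalf : ((2 * √q / z : ℝ) : ℂ) / 2 = ((q ^ (1 / 2 : ℝ) : ℝ) : ℂ) * ((z⁻¹ : ℝ) : ℂ) := by
    rw [← Real.sqrt_eq_rpow]; push_cast; ring
  rw [hhalf, mul_cpow_ofReal_nonneg (by positivity) (by positivity),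
    ← cpow_mul_ofReal_nonneg hq.le, ofReal_inv,
    show (m : ℂ) + (σ + α / 2) = σ + ((1 / 2 : ℝ) : ℂ) * (2 * m + α) by push_cast; ring,
    cpow_add _ _ (ofReal_ne_zero.mpr hq.ne')]
  ring

lemma qde_indicial_eq {z w₁ w₂ ν ε : ℂ} (hz : z ≠ 0) (hν : ν = (w₁ - w₂) / z)
    (hε : ε = 1 ∨ ε = -1) (x : ℂ) :
    z ^ 2 * (x + ((w₁ + w₂) / (2 * z) + ε * ν / 2)) ^ 2 +
        -((w₁ + w₂) * z) * (x + ((w₁ + w₂) / (2 * z) + ε * ν / 2)) + w₁ * w₂ =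
      z ^ 2 * (x * (x + ε * ν)) := by
  subst hν
  rcases hε with rfl | rfl <;> field_simp <;> ring

/-- `q^((w₁+w₂)/(2z)) · I_{±ν}(2√q/z)` solves the equivariant quantum differential
equation of ℙ¹. -/
theorem bessel_solves_qde (z : ℝ) (hz : 0 < z) (w₁ w₂ ν : ℂ)
    (hν : ν = (w₁ - w₂) / (z : ℂ))
    (ε : ℂ) (hε : ε = 1 ∨ ε = -1)
    (Ifun : ℝ → ℂ)
    (hI : Ifun = fun q : ℝ =>
      (q : ℂ) ^ ((w₁ + w₂) / (2 * (z : ℂ))) * besselI (ε * ν) (2 * Real.sqrt q / z)) :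
    ∀ q : ℝ, 0 < q →
      (z : ℂ) ^ 2 * (q : ℂ) ^ 2 * deriv (deriv Ifun) q +
        (z : ℂ) ^ 2 * (q : ℂ) * deriv Ifun q -
        (w₁ + w₂) * (z : ℂ) * (q : ℂ) * deriv Ifun q +
        w₁ * w₂ * Ifun q = (q : ℂ) * Ifun q := by
  intro q hq
  have hz₀ : (z : ℂ) ≠ 0 := ofReal_ne_zero.mpr hz.ne'
  set k : ℕ → ℂ := fun m => besselCoeff (ε * ν) m * ((z : ℂ)⁻¹) ^ (2 * (m : ℂ) + ε * ν)
  have hrec (m : ℕ) : k m = (z : ℂ) ^ 2 * (((m : ℂ) + 1) * ((m : ℂ) + 1 + ε * ν)) * k (m + 1) := by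
    simpa only [inv_inv] using besselCoeff_mul_cpow_eq_mul_succ (inv_ne_zero hz₀) (ε * ν) m
  have hk := hasInfiniteRadius_of_eq_mul hrec
    (tendsto_norm_mul_natCast_add_one_mul_atTop (pow_ne_zero 2 hz₀) _)
  have hIk : Ifun =ᶠ[𝓝 q] frobeniusSeries k ((w₁ + w₂) / (2 * (z : ℂ)) + ε * ν / 2) :=
    eventually_of_mem (Ioi_mem_nhds hq) fun y hy => by
      rw [hI]; exact ofReal_cpow_mul_besselI hz hy (ε * ν) _
  rw [hIk.deriv.deriv_eq, hIk.deriv_eq, hIk.eq_of_nhds]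
  have hind := qde_indicial_eq hz₀ hν hε
  have hind₀ := hind 0
  rw [zero_add, zero_mul, mul_zero] at hind₀
  have hode := frobeniusSeries_ode hk (μ := (w₁ + w₂) / (2 * (z : ℂ)) + ε * ν / 2)
    (A := (z : ℂ) ^ 2) (B := -((w₁ + w₂) * z)) (C := w₁ * w₂) (by rw [hind₀, zero_mul])
    (fun m => by rw [hind, hrec m]; push_cast; ring) hq
  linear_combination hode
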